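/- Every nonempty Dyck path P of semilength n avoiding DUU and D^{p+1} can be written uniquely as P = U^{i-1} Q U D^i for some i in {1,...,p} and some Dyck path Q of semilength n-i avoiding DUU and D^{p+1}. -/

import Mathlib

/-- A Dyck path of semilength `n`, encoded as a list of booleans where
`true` is an up step `U = (1,1)` and `false` is a down step `D = (1,-1)`. -/
def IsDyckPath (n : ℕ) (w : List Bool) : Prop :=
  w.length = 2 * n ∧ w.count true = n ∧
    ∀ p : List Bool, p <+: w → p.count false ≤ p.count true

/-- `w` avoids the consecutive pattern `DUU`. -/
def AvoidsDUU (w : List Bool) : Prop := ¬ [false, true, true] <:+: w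

/-- `w` avoids `p + 1` consecutive down steps. -/
def AvoidsDrun (p : ℕ) (w : List Bool) : Prop := ¬ List.replicate (p + 1) false <:+: w

/-- The set `F_n^p` of Dyck paths of semilength `n` avoiding `DUU` and `D^{p+1}`. -/
def Fnp (p n : ℕ) : Set (List Bool) :=
  {w | IsDyckPath n w ∧ AvoidsDUU w ∧ AvoidsDrun p w}

/-- The set `F_n^∞` of Dyck paths of semilength `n` avoiding `DUU`. -/
def Fninf (n : ℕ) : Set (List Bool) := {w | IsDyckPath n w ∧ AvoidsDUU w}

/-- The height of the path `w` after `k` steps. -/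
def pathHeight (w : List Bool) (k : ℕ) : ℤ :=
  ((w.take k).count true : ℤ) - ((w.take k).count false : ℤ)

/-- The Stanley order: `P` lies weakly below `Q`. -/
def StanleyLE (P Q : List Bool) : Prop := ∀ k, pathHeight P k ≤ pathHeight Q k

/-- `Q` is obtained from `P` by replacing one factor `DU` by `UD`
(the covering relation of the Stanley lattice). -/
def CoverRel (P Q : List Bool) : Prop :=
  ∃ a b : List Bool, P = a ++ [false, true] ++ b ∧ Q = a ++ [true, false] ++ b

/-- The number of upper covers of `P` within the set `S`. -/
noncomputable def numUpperCovers (S : Set (List Bool)) (P : List Bool) : ℕ :=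
  {Q | Q ∈ S ∧ CoverRel P Q}.ncard

/-- The number of lower covers of `P` within the set `S`. -/
noncomputable def numLowerCovers (S : Set (List Bool)) (P : List Bool) : ℕ :=
  {Q | Q ∈ S ∧ CoverRel Q P}.ncard

/-- The interval `[P,Q]` inside `S` (with the Stanley order) is boolean:
it is order-isomorphic to `{0,1}^h` for some `h ≥ 0`. -/
def IsBooleanInterval (S : Set (List Bool)) (P Q : List Bool) : Prop :=
  ∃ h : ℕ, Nonempty
    (RelIso (fun R R' : {R : List Bool // R ∈ S ∧ StanleyLE P R ∧ StanleyLE R Q} =>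
        StanleyLE R.1 R'.1)
      (fun f g : Fin h → Bool => f ≤ g))

/-- The interval `[P,Q]` inside `S` is linear: its elements are pairwise comparable. -/
def IsLinearInterval (S : Set (List Bool)) (P Q : List Bool) : Prop :=
  ∀ R R' : List Bool,
    R ∈ S → StanleyLE P R → StanleyLE R Q →
    R' ∈ S → StanleyLE P R' → StanleyLE R' Q →
    StanleyLE R R' ∨ StanleyLE R' R

private lemma count_tf (w : List Bool) : w.count true + w.count false = w.length := by
  induction w with
  | nil => simp
  | cons a l ih => cases a <;> simp [List.count_cons] <;> omega

private lemma infix_avoidsDUU {w P : List Bool} (h : w <:+: P) (hP : AvoidsDUU P) :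
    AvoidsDUU w := fun hc => hP (hc.trans h)

private lemma infix_avoidsDrun {p : ℕ} {w P : List Bool} (h : w <:+: P) (hP : AvoidsDrun p P) :
    AvoidsDrun p w := fun hc => hP (hc.trans h)

private lemma lem2 : ∀ (v : List Bool), AvoidsDUU (false :: v) → v.count true ≤ v.count false + 1
  | [], _ => by simp
  | (false :: v), h => by
      have hv := lem2 v (infix_avoidsDUU ⟨[false], [], by simp⟩ h)
      simp [List.count_cons] at hv ⊢; omega
  | [true], _ => by simp
  | (true :: true :: v), h => absurd ⟨[], v, by simp⟩ h
  | (true :: false :: v), h => by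
      have hv := lem2 v (infix_avoidsDUU ⟨[false, true], [], by simp⟩ h)
      simp [List.count_cons] at hv ⊢; omega
termination_by v => v.length

private lemma runlen : ∀ (i : ℕ) (rest : List Bool),
    ((List.replicate i false ++ true :: rest).takeWhile (fun b => !b)).length = i := by
  intro i
  induction i with
  | zero => intro rest; simp
  | succ k ih => intro rest; simpa [List.replicate_succ] using ih rest

private lemma dropWhile_head {q : Bool → Bool} : ∀ (l : List Bool) (b : Bool) (l' : List Bool),
    l.dropWhile q = b :: l' → q b = false := by
  intro l
  induction l with
  | nil => intro b l' h; simp at h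
  | cons a l ih =>
      intro b l' h
      rw [List.dropWhile_cons] at h
      split at h
      · exact ih _ _ h
      · injection h with h1 h2; subst h1; simp_all


/-- Unique decomposition `P = U^{i-1} Q U D^i` of a nonempty path of `F_n^p`. -/
theorem stmt2 (p n : ℕ) (hp : 2 ≤ p) (P : List Bool) (hP : P ∈ Fnp p n) (hne : P ≠ []) :
    ∃! iq : ℕ × List Bool,
      1 ≤ iq.1 ∧ iq.1 ≤ p ∧ iq.1 ≤ n ∧ iq.2 ∈ Fnp p (n - iq.1) ∧
        P = List.replicate (iq.1 - 1) true ++ iq.2 ++ [true] ++ List.replicate iq.1 false := by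
  obtain ⟨⟨hlen, hct, hpre⟩, hduu, hdrun⟩ := hP
  have hcf : P.count false = n := by have := count_tf P; omega
  set t := P.reverse with ht
  set i := (t.takeWhile (fun b => !b)).length with hi
  have htw : t.takeWhile (fun b => !b) = List.replicate i false := by
    rw [hi]
    exact List.eq_replicate_of_mem (fun b hb => by
      have := List.mem_takeWhile_imp hb; simpa using this)
  cases hd : t.dropWhile (fun b => !b) with
  | nil =>
      exfalso
      have htrep : t = List.replicate i false := by
        have h1 := List.takeWhile_append_dropWhile (p := fun b => !b) (l := t)
        rw [htw, hd, List.append_nil] at h1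
        exact h1.symm
      have hc0 : P.count true = 0 := by
        have h2 := List.count_reverse (l := P) (a := true)
        rw [← ht, htrep] at h2
        simpa [List.count_replicate] using h2.symm
      have : P = [] := List.length_eq_zero_iff.mp (by omega)
      exact hne this
  | cons b d' =>
      have hb : b = true := by
        have := dropWhile_head t b d' hd
        simpa using this
      subst hb
      have htdec : t = List.replicate i false ++ true :: d' := by
        have h1 := List.takeWhile_append_dropWhile (p := fun b => !b) (l := t)
        rw [htw, hd] at h1
        exact h1.symm
      have hPdec : P = d'.reverse ++ [true] ++ List.replicate i false := by
        have h2 : P = t.reverse := by rw [ht, List.reverse_reverse]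
        rw [h2, htdec]
        simp
      set P₂ := d'.reverse with hP₂
      have hct2 : P₂.count true + 1 = n := by
        rw [hPdec] at hct
        simp [List.count_append, List.count_replicate] at hct
        omega
      have hcf2 : P₂.count false + i = n := by
        rw [hPdec] at hcf
        simp [List.count_append, List.count_replicate] at hcf
        omega
      have hlen2 : P₂.length + i + 1 = 2 * n := by have := count_tf P₂; omega
      have hn1 : 1 ≤ n := by
        rcases Nat.eq_zero_or_pos n with h0 | h1
        · exact absurd (List.length_eq_zero_iff.mp (by omega)) hne
        · exact h1
      have hi1 : 1 ≤ i := by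
        have := hpre P₂ ⟨[true] ++ List.replicate i false, by rw [hPdec]; simp⟩
        omega
      have hin : i ≤ n := by omega
      have hip : i ≤ p := by
        by_contra hc
        push_neg at hc
        apply hdrun
        refine ⟨P₂ ++ [true], List.replicate (i - (p + 1)) false, ?_⟩
        rw [hPdec]
        have : List.replicate i (false : Bool)
            = List.replicate (p + 1) false ++ List.replicate (i - (p + 1)) false := by
          rw [← List.replicate_add]; congr 1; omega
        rw [this]
        simp [List.append_assoc]
      have hkey : ∀ u v : List Bool, P₂ = u ++ false :: v → u.count false + i ≤ u.count true := by
        intro u v huv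
        have hinf : (false :: (v ++ [true])) <:+: P :=
          ⟨u, List.replicate i false, by rw [hPdec, huv]; simp⟩
        have h2 := lem2 (v ++ [true]) (infix_avoidsDUU hinf hduu)
        have e1 : u.count true + v.count true + 1 = n := by
          have := hct2; rw [huv] at this
          simp [List.count_append, List.count_cons] at this; omega
        have e2 : u.count false + v.count false + 1 + i = n := by
          have := hcf2; rw [huv] at this
          simp [List.count_append, List.count_cons] at this; omega
        simp [List.count_append] at h2
        omega
      have hilen : i - 1 ≤ P₂.length := by omega
      set a := (P₂.takeWhile (fun b => b)).length with ha
      have htw2 : P₂.takeWhile (fun b => b) = List.replicate a true := by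
        rw [ha]
        exact List.eq_replicate_of_mem (fun b hb => by
          have := List.mem_takeWhile_imp hb; simpa using this)
      have hsplit : List.replicate a true ++ P₂.dropWhile (fun b => b) = P₂ := by
        rw [← htw2]; exact List.takeWhile_append_dropWhile
      have htake : P₂.take (i - 1) = List.replicate (i - 1) true := by
        rcases le_or_gt (i - 1) a with hle | hlt
        · calc P₂.take (i - 1)
              = (List.replicate a true ++ P₂.dropWhile (fun b => b)).take (i - 1) := by
                rw [hsplit]
            _ = (List.replicate a true).take (i - 1) :=
                List.take_append_of_le_length (by simpa using hle)
            _ = List.replicate (i - 1) true := by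
                rw [List.take_replicate]; congr 1; omega
        · exfalso
          cases hd2 : P₂.dropWhile (fun b => b) with
          | nil =>
              rw [hd2, List.append_nil] at hsplit
              have e1 := hct2; have e2 := hcf2
              rw [← hsplit] at e1 e2
              simp [List.count_replicate] at e1 e2
              omega
          | cons c v =>
              have hc : c = false := by
                have := dropWhile_head P₂ c v hd2
                simpa using this
              subst hc
              rw [hd2] at hsplit
              have := hkey (List.replicate a true) v hsplit.symm
              simp [List.count_replicate] at this
              omega
      set Q := P₂.drop (i - 1) with hQ
      have hP₂dec : P₂ = List.replicate (i - 1) true ++ Q := by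
        rw [hQ, ← htake, List.take_append_drop]
      have hPfull : P = List.replicate (i - 1) true ++ Q ++ [true] ++ List.replicate i false := by
        rw [hPdec, hP₂dec]
      have hctQ : Q.count true + i = n := by
        have := hct2; rw [hP₂dec] at this
        simp [List.count_append, List.count_replicate] at this; omega
      have hcfQ : Q.count false + i = n := by
        have := hcf2; rw [hP₂dec] at this
        simp [List.count_append, List.count_replicate] at this; omega
      have hlenQ : Q.length = 2 * (n - i) := by have := count_tf Q; omega
      have hpreQ : ∀ w : List Bool, w <+: Q → w.count false ≤ w.count true := by
        intro w
        induction w using List.reverseRecOn with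
        | nil => intro _; simp
        | append_singleton w' b ihw =>
            intro hw
            have hw' : w' <+: Q := (w'.prefix_append [b]).trans hw
            cases b with
            | true =>
                have := ihw hw'
                simp [List.count_append] <;> omega
            | false =>
                obtain ⟨r, hr⟩ := hw
                have := hkey (List.replicate (i - 1) true ++ w') r
                  (by rw [hP₂dec, ← hr]; simp)
                simp [List.count_append, List.count_replicate] at this ⊢
                omega
      have hQinf : Q <:+: P :=
        ⟨List.replicate (i - 1) true, [true] ++ List.replicate i false, by rw [hPfull]; simp⟩
      have hQmem : Q ∈ Fnp p (n - i) :=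
        ⟨⟨hlenQ, by omega, hpreQ⟩, infix_avoidsDUU hQinf hduu, infix_avoidsDrun hQinf hdrun⟩
      refine ⟨(i, Q), ⟨hi1, hip, hin, hQmem, hPfull⟩, ?_⟩
      rintro ⟨j, R⟩ ⟨hj1, hjp, hjn, hRmem, hRdec⟩
      have hrev : P.reverse = List.replicate j false ++ true :: (R.reverse ++ List.replicate (j - 1) true) := by
        rw [hRdec]; simp [List.reverse_append, List.append_assoc]
      have hji : j = i := by
        rw [hi, ht, hrev]
        exact (runlen j _).symm
      subst hji
      have h1 := hRdec.symm.trans hPfull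
      have hRQ : R = Q :=
        List.append_cancel_left (List.append_cancel_right (List.append_cancel_right h1))
      rw [hRQ]
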